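/- For 0 < q < 1, the set A = {⌊n^{1/q}⌋ : n ∈ ℕ} satisfies ∑_{a∈A} 1/a^q = ∞ yet λ(A) = q; hence I_c^{(q)} ⊊ I_{≤q}. -/
import Mathlib

open Filter Topology Set

/-- The convergence exponent of a set `A` of positive integers:
`λ(A) = inf {t > 0 : ∑_{a ∈ A} 1/a^t < ∞}`. -/
noncomputable def convExp (A : Set ℕ) : ℝ :=
  sInf {t : ℝ | 0 < t ∧ Summable (fun a : A => ((a : ℝ) ^ t)⁻¹)}

lemma floor_ge_half {x : ℝ} (hx : 1 ≤ x) : x / 2 ≤ (⌊x⌋₊ : ℝ) := by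
  rcases le_or_gt 2 x with h | h
  · have h1 : x - 1 < (⌊x⌋₊ : ℝ) := Nat.sub_one_lt_floor x
    linarith
  · have h1 : (1 : ℕ) ≤ ⌊x⌋₊ := Nat.le_floor (by exact_mod_cast hx)
    have : (1 : ℝ) ≤ (⌊x⌋₊ : ℝ) := by exact_mod_cast h1
    linarith

lemma rpow_superadd {x p : ℝ} (hx : 0 ≤ x) (hp : 1 ≤ p) :
    x ^ p + 1 ≤ (x + 1) ^ p := by
  lift x to NNReal using hx
  have := NNReal.add_rpow_le_rpow_add x 1 hp
  have h2 : ((x ^ p + 1 ^ p : NNReal) : ℝ) ≤ (((x + 1) ^ p : NNReal) : ℝ) := by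
    exact_mod_cast this
  simpa [NNReal.coe_rpow] using h2

section main
variable {q : ℝ}

/-- abbreviation for our map -/
private noncomputable def fq (q : ℝ) (n : ℕ) : ℕ := ⌊(n : ℝ) ^ (1 / q)⌋₊

lemma one_le_rpow_oneq (hq0 : 0 < q) {n : ℕ} (hn : 1 ≤ n) :
    1 ≤ (n : ℝ) ^ (1 / q) :=
  Real.one_le_rpow (by exact_mod_cast hn) (by positivity)

lemma one_le_fq (hq0 : 0 < q) {n : ℕ} (hn : 1 ≤ n) : 1 ≤ fq q n :=
  Nat.le_floor (by exact_mod_cast one_le_rpow_oneq hq0 hn)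

/-- lower bound: n^{1/q}/2 ≤ fq q n -/
lemma fq_lb (hq0 : 0 < q) {n : ℕ} (hn : 1 ≤ n) :
    (n : ℝ) ^ (1 / q) / 2 ≤ (fq q n : ℝ) :=
  floor_ge_half (one_le_rpow_oneq hq0 hn)

/-- upper bound in the form (fq q n)^q ≤ n -/
lemma fq_pow_le (hq0 : 0 < q) {n : ℕ} (hn : 1 ≤ n) :
    ((fq q n : ℝ)) ^ q ≤ (n : ℝ) := by
  have h1 : (fq q n : ℝ) ≤ (n : ℝ) ^ (1 / q) := Nat.floor_le (by positivity)
  have h2 : ((fq q n : ℝ)) ^ q ≤ ((n : ℝ) ^ (1 / q)) ^ q :=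
    Real.rpow_le_rpow (by positivity) h1 hq0.le
  have h3 : ((n : ℝ) ^ (1 / q)) ^ q = (n : ℝ) := by
    rw [← Real.rpow_mul (by positivity), one_div_mul_cancel hq0.ne', Real.rpow_one]
  linarith
  
lemma fq_strictMonoOn (hq0 : 0 < q) (hq1 : q < 1) :
    StrictMonoOn (fq q) {n : ℕ | 1 ≤ n} := by
  have hp : 1 ≤ 1 / q := by
    rw [le_div_iff₀ hq0]; linarith
  have key : ∀ m : ℕ, 1 ≤ m → fq q m < fq q (m + 1) := by
    intro m hm
    have h1 : (m : ℝ) ^ (1 / q) + 1 ≤ ((m : ℝ) + 1) ^ (1 / q) :=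
      rpow_superadd (by positivity) hp
    have h2 : fq q m + 1 ≤ fq q (m + 1) := by
      have hfl : (fq q m : ℝ) ≤ (m : ℝ) ^ (1 / q) :=
        Nat.floor_le (show (0:ℝ) ≤ (m : ℝ) ^ (1 / q) by positivity)
      have key2 : ((fq q m : ℝ)) + 1 ≤ ((m + 1 : ℕ) : ℝ) ^ (1 / q) := by
        push_cast
        linarith
      exact Nat.le_floor (by push_cast; push_cast at key2; linarith)
    omega
  intro a ha b hb hab
  have mono : ∀ c d : ℕ, c ≤ d → fq q c ≤ fq q d := by
    intro c d hcd
    apply Nat.floor_le_floor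
    exact Real.rpow_le_rpow (by positivity) (by exact_mod_cast hcd) (by positivity)
  calc fq q a < fq q (a + 1) := key a ha
    _ ≤ fq q b := mono _ _ (by omega)

/-- equivalence-based reindexing of summability over the image -/
lemma summable_image_iff (hq0 : 0 < q) (hq1 : q < 1) (t : ℝ) :
    Summable (fun a : ((fun n : ℕ => ⌊(n : ℝ) ^ (1 / q)⌋₊) '' {n | 1 ≤ n}) =>
        ((a : ℝ) ^ t)⁻¹) ↔
    Summable (fun n : {n : ℕ | 1 ≤ n} => (((fq q n : ℕ) : ℝ) ^ t)⁻¹) := by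
  have hinj : Set.InjOn (fq q) {n : ℕ | 1 ≤ n} := (fq_strictMonoOn hq0 hq1).injOn
  constructor
  · intro h
    exact (Equiv.summable_iff (Equiv.Set.imageOfInjOn (fq q) {n : ℕ | 1 ≤ n} hinj)
      (f := fun a : (fq q '' {n : ℕ | 1 ≤ n}) => ((a : ℝ) ^ t)⁻¹)).mpr h
  · intro h
    exact (Equiv.summable_iff (Equiv.Set.imageOfInjOn (fq q) {n : ℕ | 1 ≤ n} hinj)
      (f := fun a : (fq q '' {n : ℕ | 1 ≤ n}) => ((a : ℝ) ^ t)⁻¹)).mp h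

lemma not_summable_harmonic_subtype :
    ¬ Summable (fun n : {n : ℕ | 1 ≤ n} => ((n : ℕ) : ℝ)⁻¹) := by
  intro h
  have hset : {n : ℕ | 1 ≤ n} = (({0} : Set ℕ))ᶜ := by
    ext n; simp [Nat.one_le_iff_ne_zero]
  rw [hset] at h
  have := (Set.finite_singleton (0 : ℕ)).summable_compl_iff
    (f := fun n : ℕ => ((n : ℕ) : ℝ)⁻¹) |>.mp h
  exact Real.not_summable_natCast_inv this

/-- divergence at exponent q -/
lemma not_summable_at_q (hq0 : 0 < q) (hq1 : q < 1) :
    ¬ Summable (fun n : {n : ℕ | 1 ≤ n} => (((fq q n : ℕ) : ℝ) ^ q)⁻¹) := by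
  intro h
  apply not_summable_harmonic_subtype
  apply h.of_nonneg_of_le (fun n => by positivity)
  rintro ⟨n, hn⟩
  have h1 : ((fq q n : ℝ)) ^ q ≤ (n : ℝ) := fq_pow_le hq0 hn
  have h2 : (0 : ℝ) < ((fq q n : ℝ)) ^ q := by
    have := one_le_fq hq0 hn
    have : (1:ℝ) ≤ (fq q n : ℝ) := by exact_mod_cast this
    positivity
  exact inv_anti₀ h2 h1

/-- convergence at exponent t > q -/
lemma summable_at_t (hq0 : 0 < q) (hq1 : q < 1) {t : ℝ} (ht : q < t) :
    Summable (fun n : {n : ℕ | 1 ≤ n} => (((fq q n : ℕ) : ℝ) ^ t)⁻¹) := by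
  have ht0 : 0 < t := hq0.trans ht
  have hmaj : Summable (fun n : ℕ => (2 : ℝ) ^ t * (((n : ℝ)) ^ (t / q))⁻¹) := by
    apply Summable.mul_left
    exact Real.summable_nat_rpow_inv.mpr (by rw [lt_div_iff₀ hq0]; linarith)
  apply Summable.of_nonneg_of_le (fun n => by positivity) _ (hmaj.subtype {n : ℕ | 1 ≤ n})
  rintro ⟨n, hn⟩
  simp only
  have hfb : (n : ℝ) ^ (1 / q) / 2 ≤ (fq q n : ℝ) := fq_lb hq0 hn
  have hpos : (0 : ℝ) < (n : ℝ) ^ (1 / q) / 2 := by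
    have := one_le_rpow_oneq (q := q) hq0 hn; linarith
  have h1 : ((n : ℝ) ^ (1 / q) / 2) ^ t ≤ ((fq q n : ℝ)) ^ t :=
    Real.rpow_le_rpow hpos.le hfb ht0.le
  have h2 : ((n : ℝ) ^ (1 / q) / 2) ^ t = (n : ℝ) ^ (t / q) / 2 ^ t := by
    rw [Real.div_rpow (by positivity) (by norm_num), ← Real.rpow_mul (by positivity)]
    ring_nf
  have h3 : (0 : ℝ) < ((n : ℝ) ^ (1 / q) / 2) ^ t := Real.rpow_pos_of_pos hpos t
  have h4 : (((fq q n : ℝ)) ^ t)⁻¹ ≤ (((n : ℝ) ^ (1 / q) / 2) ^ t)⁻¹ :=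
    inv_anti₀ h3 h1
  rw [h2] at h4
  have h5 : ((n : ℝ) ^ (t / q) / 2 ^ t)⁻¹ = 2 ^ t * ((n : ℝ) ^ (t / q))⁻¹ := by
    field_simp
  rw [h5] at h4
  exact h4

end main

/-- For `0 < q < 1`, the set `A = {⌊n^{1/q}⌋ : n ≥ 1}` satisfies
`∑_{a ∈ A} 1/a^q = ∞` yet `λ(A) = q`; hence `I_c^{(q)} ⊊ I_{≤q}`. -/
theorem Ic_ssubset_Ile (q : ℝ) (hq0 : 0 < q) (hq1 : q < 1) :
    (¬ Summable (fun a : ((fun n : ℕ => ⌊(n : ℝ) ^ (1 / q)⌋₊) '' {n | 1 ≤ n}) =>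
        ((a : ℝ) ^ q)⁻¹)) ∧
    convExp ((fun n : ℕ => ⌊(n : ℝ) ^ (1 / q)⌋₊) '' {n | 1 ≤ n}) = q ∧
    {B : Set ℕ | Summable (fun b : B => ((b : ℝ) ^ q)⁻¹)} ⊂
      {B : Set ℕ | convExp B ≤ q} := by
  set A : Set ℕ := (fun n : ℕ => ⌊(n : ℝ) ^ (1 / q)⌋₊) '' {n | 1 ≤ n} with hA
  -- divergence at q
  have hdiv : ¬ Summable (fun a : A => ((a : ℝ) ^ q)⁻¹) := by
    rw [summable_image_iff hq0 hq1 q]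
    exact not_summable_at_q hq0 hq1
  -- a ∈ A → 1 ≤ a
  have hA1 : ∀ a ∈ A, 1 ≤ a := by
    rintro a ⟨n, hn, rfl⟩
    exact one_le_fq hq0 hn
  -- nonsummable for any 0 < t ≤ q
  have hdiv' : ∀ t : ℝ, t ≤ q → ¬ Summable (fun a : A => ((a : ℝ) ^ t)⁻¹) := by
    intro t htq hsum
    apply hdiv
    apply hsum.of_nonneg_of_le (fun a => by positivity)
    rintro ⟨a, ha⟩
    have h1 : (1 : ℝ) ≤ (a : ℝ) := by exact_mod_cast hA1 a ha
    have h2 : (a : ℝ) ^ t ≤ (a : ℝ) ^ q :=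
      Real.rpow_le_rpow_of_exponent_le h1 htq
    have h3 : (0 : ℝ) < (a : ℝ) ^ t := Real.rpow_pos_of_pos (by linarith) t
    exact inv_anti₀ h3 h2
  -- summable for all t > q
  have hconv : ∀ t : ℝ, q < t → Summable (fun a : A => ((a : ℝ) ^ t)⁻¹) := by
    intro t ht
    rw [summable_image_iff hq0 hq1 t]
    exact summable_at_t hq0 hq1 ht
  -- the defining set is exactly (q, ∞)
  have hSet : {t : ℝ | 0 < t ∧ Summable (fun a : A => ((a : ℝ) ^ t)⁻¹)} = Set.Ioi q := by
    ext t
    simp only [Set.mem_setOf_eq, Set.mem_Ioi]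
    constructor
    · rintro ⟨ht0, hsum⟩
      by_contra hle
      exact hdiv' t (not_lt.mp hle) hsum
    · intro ht
      exact ⟨hq0.trans ht, hconv t ht⟩
  have hlam : convExp A = q := by
    rw [convExp, hSet, csInf_Ioi]
  refine ⟨hdiv, hlam, ?_⟩
  constructor
  · -- subset
    intro B hB
    simp only [Set.mem_setOf_eq] at hB ⊢
    have hBt : ∀ t : ℝ, q < t → Summable (fun b : B => ((b : ℝ) ^ t)⁻¹) := by
      intro t ht
      apply hB.of_nonneg_of_le (fun b => by positivity)
      rintro ⟨b, hb⟩
      rcases Nat.eq_zero_or_pos b with hb0 | hb1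
      · subst hb0
        simp [Real.zero_rpow hq0.ne', Real.zero_rpow (hq0.trans ht).ne']
      · have h1 : (1 : ℝ) ≤ (b : ℝ) := by exact_mod_cast hb1
        have h2 : (b : ℝ) ^ q ≤ (b : ℝ) ^ t :=
          Real.rpow_le_rpow_of_exponent_le h1 ht.le
        have h3 : (0 : ℝ) < (b : ℝ) ^ q := Real.rpow_pos_of_pos (by linarith) q
        exact inv_anti₀ h3 h2
    have hsub : Set.Ioi q ⊆ {t : ℝ | 0 < t ∧ Summable (fun b : B => ((b : ℝ) ^ t)⁻¹)} := by
      intro t ht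
      exact ⟨hq0.trans ht, hBt t ht⟩
    have hbdd : BddBelow {t : ℝ | 0 < t ∧ Summable (fun b : B => ((b : ℝ) ^ t)⁻¹)} :=
      ⟨0, fun t ht => ht.1.le⟩
    calc convExp B ≤ sInf (Set.Ioi q) := csInf_le_csInf hbdd ⟨q + 1, by simp⟩ hsub
      _ = q := csInf_Ioi
  · -- not superset: A is a witness
    intro hsub
    have : A ∈ {B : Set ℕ | Summable (fun b : B => ((b : ℝ) ^ q)⁻¹)} :=
      hsub (by simp only [Set.mem_setOf_eq]; rw [hlam])
    exact hdiv this
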